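/- arXiv:2508.00343 — 6 statements merged into one kernel-verified Lean document; each statement's English description precedes it below -/
import Mathlib

section
/- For all n, with F(n) = ((1/2)_n)^2 / ((1)_n^2 (n+1)) and G(n) = 4n ((1/2)_n)^2 / ((1)_n)^2 (Pochhammer symbols over the rationals), one has F(n) = G(n+1) - G(n). -/
open Polynomial

/-- Rising Pochhammer symbol over ℚ. -/
noncomputable def poch (x : ℚ) (n : ℕ) : ℚ := (ascPochhammer ℚ n).eval x

lemma poch_succ (x : ℚ) (n : ℕ) : poch x (n+1) = poch x n * (x + n) := by
  simp [poch, ascPochhammer_succ_right, mul_comm]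

lemma poch_one_ne_zero (n : ℕ) : poch 1 n ≠ 0 := by
  induction n with
  | zero => simp [poch]
  | succ k ih =>
    rw [poch_succ]
    exact mul_ne_zero ih (by positivity)

/-- with `F n = ((1/2)_n)^2 / ((1)_n^2 (n+1))` and
`G n = 4n ((1/2)_n)^2 / ((1)_n)^2`, one has `F n = G (n+1) - G n`. -/
theorem vanHamme_I2_gosper (n : ℕ) :
    (poch (1/2) n)^2 / ((poch 1 n)^2 * (n + 1)) =
      4 * (n + 1) * (poch (1/2) (n+1))^2 / (poch 1 (n+1))^2
        - 4 * n * (poch (1/2) n)^2 / (poch 1 n)^2 := by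
  rw [poch_succ, poch_succ]
  have h1 : poch 1 n ≠ 0 := poch_one_ne_zero n
  have h2 : (n : ℚ) + 1 ≠ 0 := by positivity
  field_simp
  ring
end

section
/- For every odd prime p, the Pochhammer symbol (1/2)_{p-1} equals (p/2) · Γ_p(1/2 + p - 1) / Γ_p(1/2), where Γ_p is Morita's p-adic gamma function. -/
/-!
Morita's `Γ_p` satisfies `Γ_p (x + 1) = -x Γ_p x` when `x` is a unit and `Γ_p (x + 1) = -Γ_p x`
when `p ∣ x`: both sides are continuous in `x` (divisibility by `p` is a clopen condition) and
agree on the dense subset `ℕ`. Iterating from `1/2` for `p - 1` steps, `Γ_p (1/2 + p - 1) / Γ_p (1/2)`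
is `(-1)^(p-1) = 1` times the product of the factors `1/2 + i`, `i < p - 1`, except the single
one divisible by `p`, namely `1/2 + (p - 1)/2 = p/2`; that factor is the `p/2` of the formula.
-/

open Polynomial Finset

namespace PadicInt

variable {p : ℕ} [Fact p.Prime]

lemma p_dvd_natCast_iff {n : ℕ} : (p : ℤ_[p]) ∣ n ↔ p ∣ n := by
  rw [← norm_lt_one_iff_dvd, norm_natCast_lt_one_iff]

lemma frontier_setOf_p_dvd : frontier {x : ℤ_[p] | (p : ℤ_[p]) ∣ x} = ∅ := by
  have : {x : ℤ_[p] | (p : ℤ_[p]) ∣ x} = Metric.ball 0 1 := by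
    ext x
    simp [norm_lt_one_iff_dvd]
  rw [this, IsUltrametricDist.frontier_ball_eq_empty]

open Classical in
/-- The factor in Morita's functional equation `Γ_p (x + 1) = moritaFactor x * Γ_p x`. -/
noncomputable def moritaFactor (x : ℤ_[p]) : ℤ_[p] := if (p : ℤ_[p]) ∣ x then -1 else -x

open Classical in
lemma continuous_moritaFactor : Continuous (moritaFactor (p := p)) :=
  continuous_const.if (by simp [frontier_setOf_p_dvd]) continuous_neg

lemma norm_moritaFactor (x : ℤ_[p]) : ‖moritaFactor x‖ = 1 := by
  unfold moritaFactor
  split_ifs with hx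
  · simp
  · rw [norm_neg]
    exact (norm_le_one x).antisymm (not_lt.mp (mt (norm_lt_one_iff_dvd x).mp hx))

open Classical in
lemma moritaFactor_mul_ite (x : ℤ_[p]) :
    moritaFactor x * (if (p : ℤ_[p]) ∣ x then x else 1) = -x := by
  unfold moritaFactor
  split_ifs <;> ring

lemma p_dvd_add_natCast_iff {h : ℤ_[p]} (hh : 2 * h = 1) (i : ℕ) :
    (p : ℤ_[p]) ∣ h + i ↔ p ∣ 2 * i + 1 := by
  have h2 : IsUnit (2 : ℤ_[p]) := .of_mul_eq_one h hh
  have hcast : ((2 * i + 1 : ℕ) : ℤ_[p]) = 2 * (h + i) := by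
    push_cast
    linear_combination -hh
  rw [← p_dvd_natCast_iff, hcast, h2.dvd_mul_left]

lemma coe_eq_one_div_two {h : ℤ_[p]} (hh : 2 * h = 1) : (h : ℚ_[p]) = 1 / 2 := by
  have hhQ : (2 : ℚ_[p]) * h = 1 := by exact_mod_cast congrArg ((↑) : ℤ_[p] → ℚ_[p]) hh
  linear_combination hhQ / 2

end PadicInt

lemma Nat.filter_range_dvd_two_mul_add_one {p : ℕ} (hp : Odd p) (hp1 : 1 < p) :
    (range (p - 1)).filter (fun i => p ∣ 2 * i + 1) = {(p - 1) / 2} := by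
  obtain ⟨m, rfl⟩ := hp
  ext i
  simp only [mem_filter, mem_range, mem_singleton]
  constructor
  · rintro ⟨hi, hdvd⟩
    have := Nat.eq_of_dvd_of_lt_two_mul (by omega) hdvd (by omega)
    omega
  · rintro rfl
    exact ⟨by omega, by rw [show 2 * ((2 * m + 1 - 1) / 2) + 1 = 2 * m + 1 by omega]⟩

lemma RingHom.map_ascPochhammer_eval {R S : Type*} [Semiring R] [Semiring S] (f : R →+* S)
    (n : ℕ) (x : R) : f ((ascPochhammer R n).eval x) = (ascPochhammer S n).eval (f x) := by
  rw [ascPochhammer_eval₂ f, eval₂_hom]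

lemma coe_poch_one_div_two {p : ℕ} [Fact p.Prime] {h : ℤ_[p]} (hh : 2 * h = 1) (n : ℕ) :
    ((poch (1 / 2) n : ℚ) : ℚ_[p]) = (((ascPochhammer ℤ_[p] n).eval h : ℤ_[p]) : ℚ_[p]) := by
  calc _ = (ascPochhammer ℚ_[p] n).eval ((1 / 2 : ℚ) : ℚ_[p]) :=
        (Rat.castHom ℚ_[p]).map_ascPochhammer_eval _ _
    _ = _ := by
      rw [Rat.cast_div, Rat.cast_one, Rat.cast_ofNat, ← PadicInt.coe_eq_one_div_two hh]
      exact (PadicInt.Coe.ringHom.map_ascPochhammer_eval _ _).symm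

open PadicInt

structure IsMoritaGamma (p : ℕ) [Fact p.Prime] (G : ℤ_[p] → ℤ_[p]) : Prop where
  continuous : Continuous G
  natCast_eq (k : ℕ) : G k = (-1) ^ k * ∏ j ∈ (Ioo 0 k).filter (fun j => ¬ p ∣ j), (j : ℤ_[p])

namespace IsMoritaGamma

variable {p : ℕ} [Fact p.Prime] {G : ℤ_[p] → ℤ_[p]}

lemma natCast_eq_prod (hG : IsMoritaGamma p G) (k : ℕ) :
    G k = ∏ j ∈ range k, moritaFactor (j : ℤ_[p]) := by
  have hfilter : (Ioo 0 k).filter (fun j => ¬ p ∣ j) = (range k).filter (fun j => ¬ p ∣ j) := by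
    ext j
    simp only [mem_filter, mem_Ioo, mem_range]
    constructor
    · rintro ⟨⟨-, hj⟩, hpj⟩
      exact ⟨hj, hpj⟩
    · rintro ⟨hj, hpj⟩
      exact ⟨⟨Nat.pos_of_ne_zero (by rintro rfl; exact hpj (dvd_zero p)), hj⟩, hpj⟩
  rw [hG.natCast_eq, hfilter, prod_filter, ← card_range k, ← prod_const, card_range,
    ← prod_mul_distrib]
  refine prod_congr rfl fun j _ => ?_
  simp only [moritaFactor, p_dvd_natCast_iff]
  split_ifs <;> ring

lemma map_add_one (hG : IsMoritaGamma p G) (x : ℤ_[p]) : G (x + 1) = moritaFactor x * G x := by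
  refine congrFun (Continuous.ext_on denseRange_natCast (f := fun x => G (x + 1))
    (hG.continuous.comp (continuous_add_const 1))
    (continuous_moritaFactor.mul hG.continuous) ?_) x
  rintro _ ⟨k, rfl⟩
  simp only [Pi.mul_apply]
  rw [← Nat.cast_succ, hG.natCast_eq_prod, hG.natCast_eq_prod, prod_range_succ, mul_comm]

lemma norm_eq_one (hG : IsMoritaGamma p G) (x : ℤ_[p]) : ‖G x‖ = 1 := by
  refine congrFun (Continuous.ext_on denseRange_natCast (g := fun _ => (1 : ℝ))
    (continuous_norm.comp hG.continuous) continuous_const ?_) x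
  rintro _ ⟨k, rfl⟩
  simp [hG.natCast_eq_prod, norm_prod, norm_moritaFactor]

open Classical in
lemma neg_one_pow_mul_ascPochhammer (hG : IsMoritaGamma p G) (x : ℤ_[p]) (n : ℕ) :
    (-1) ^ n * (ascPochhammer ℤ_[p] n).eval x * G x =
      G (x + n) * ∏ i ∈ (range n).filter (fun i : ℕ => (p : ℤ_[p]) ∣ x + i), (x + i) := by
  rw [prod_filter]
  induction n with
  | zero => simp
  | succ n ih =>
    rw [ascPochhammer_succ_eval, prod_range_succ, Nat.cast_succ, ← add_assoc, hG.map_add_one]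
    calc _ = (-1) ^ n * (ascPochhammer ℤ_[p] n).eval x * G x * -(x + n) := by ring
      _ = _ := by rw [ih, ← moritaFactor_mul_ite]; ring

end IsMoritaGamma

/-- for every odd prime `p`, if `G` is Morita's `p`-adic gamma function
(the continuous extension of `k ↦ (-1)^k ∏_{0<j<k, p∤j} j` on `ℤ_p`), and `h = 1/2` in
`ℤ_p`, then `(1/2)_{p-1} = (p/2) · Γ_p(1/2 + p - 1) / Γ_p(1/2)`. -/
theorem poch_half_p_sub_one_gammaP (p : ℕ) [Fact p.Prime] (hp : p ≠ 2)
    (G : ℤ_[p] → ℤ_[p]) (hGcont : Continuous G)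
    (hGnat : ∀ k : ℕ, G (k : ℤ_[p]) =
      (-1)^k * ∏ j ∈ (Finset.Ioo 0 k).filter (fun j => ¬ p ∣ j), (j : ℤ_[p]))
    (h : ℤ_[p]) (hh : 2 * h = 1) :
    ((poch (1/2) (p-1) : ℚ) : ℚ_[p]) =
      ((p : ℚ_[p]) / 2) * ((G (h + p - 1) : ℚ_[p]) / (G h : ℚ_[p])) := by
  classical
  have hG : IsMoritaGamma p G := ⟨hGcont, hGnat⟩
  have hprime : p.Prime := Fact.out
  have hodd : Odd p := hprime.odd_of_ne_two hp
  have hfilter : (range (p - 1)).filter (fun i : ℕ => (p : ℤ_[p]) ∣ h + i) = {(p - 1) / 2} := by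
    simp only [p_dvd_add_natCast_iff hh]
    exact Nat.filter_range_dvd_two_mul_add_one hodd hprime.one_lt
  have hkey := hG.neg_one_pow_mul_ascPochhammer h (p - 1)
  rw [hfilter, prod_singleton, (hprime.even_sub_one hp).neg_one_pow, one_mul,
    Nat.cast_sub hprime.one_le, Nat.cast_one, ← add_sub_assoc] at hkey
  have hmid : ((h + ((p - 1) / 2 : ℕ) : ℤ_[p]) : ℚ_[p]) = p / 2 := by
    have hp' : (((2 * ((p - 1) / 2) + 1 : ℕ)) : ℚ_[p]) = p := by
      rw [show 2 * ((p - 1) / 2) + 1 = p by obtain ⟨m, rfl⟩ := hodd; omega]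
    push_cast at hp' ⊢
    rw [coe_eq_one_div_two hh]
    linear_combination hp' / 2
  have hGh : (G h : ℚ_[p]) ≠ 0 :=
    coe_ne_zero.mpr (norm_ne_zero_iff.mp (by rw [hG.norm_eq_one]; exact one_ne_zero))
  have hkeyQ := congrArg ((↑) : ℤ_[p] → ℚ_[p]) hkey
  rw [PadicInt.coe_mul, PadicInt.coe_mul, hmid] at hkeyQ
  rw [coe_poch_one_div_two hh, mul_div_assoc', eq_div_iff hGh]
  linear_combination hkeyQ
end

section
/- For every prime p ≡ 1 (mod 4), (1/4)_{(p-1)/2} = (p/4) · Γ_p(-1/4 + p/2) / Γ_p(1/4), where all quantities are in Q_p. -/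
open Polynomial Finset

/-!
The recursion that `Γ_p` satisfies on the naturals extends by continuity to all of `ℤ_p`:
`Γ_p(x + N) = (-1)^N Γ_p(x) ∏_{i < N, x + i ∈ ℤ_p^×} (x + i)`. This works because `ℕ` is dense
in `ℤ_p` and "keep `y` if it is a unit, otherwise replace it by `1`" is continuous, the units
being the clopen unit sphere. For `p = 4c + 1`, `x = 1/4` and `N = 2c`, the only non-unit
among the `1/4 + i` is `1/4 + c = p/4`, and `-1/4 + p/2 = 1/4 + 2c`. Hence
`(1/4)_{2c} = (p/4) ∏_{i ≠ c} (1/4 + i) = (p/4) Γ_p(1/4 + 2c) / Γ_p(1/4)`, where `Γ_p(1/4)` is a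
unit, again by continuity.
-/

variable {p : ℕ} [Fact p.Prime]

lemma PadicInt.setOf_isUnit_eq_sphere : {y : ℤ_[p] | IsUnit y} = Metric.sphere 0 1 := by
  ext y
  simp [PadicInt.isUnit_iff]

lemma PadicInt.isUnit_natCast_iff {n : ℕ} : IsUnit (n : ℤ_[p]) ↔ ¬ p ∣ n := by
  rw [PadicInt.isUnit_iff, PadicInt.norm_natCast_eq_one_iff,
    (Fact.out : p.Prime).coprime_iff_not_dvd]

lemma PadicInt.coe_prod {α : Type*} (s : Finset α) (f : α → ℤ_[p]) :
    (((∏ z ∈ s, f z) : ℤ_[p]) : ℚ_[p]) = ∏ z ∈ s, (f z : ℚ_[p]) :=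
  map_prod PadicInt.Coe.ringHom f s

open scoped Classical in
noncomputable def unitOrOne (y : ℤ_[p]) : ℤ_[p] := if IsUnit y then y else 1

lemma unitOrOne_of_isUnit {y : ℤ_[p]} (hy : IsUnit y) : unitOrOne y = y := if_pos hy

lemma unitOrOne_of_not_isUnit {y : ℤ_[p]} (hy : ¬ IsUnit y) : unitOrOne y = 1 := if_neg hy

lemma norm_unitOrOne (y : ℤ_[p]) : ‖unitOrOne y‖ = 1 := by
  by_cases hy : IsUnit y
  · rw [unitOrOne_of_isUnit hy, ← PadicInt.isUnit_iff.1 hy]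
  · rw [unitOrOne_of_not_isUnit hy, norm_one]

open scoped Classical in
@[fun_prop]
lemma continuous_unitOrOne : Continuous (unitOrOne : ℤ_[p] → ℤ_[p]) := by
  refine continuous_id.if (fun y hy => ?_) continuous_const
  rw [PadicInt.setOf_isUnit_eq_sphere,
    (IsUltrametricDist.isClopen_sphere 0 one_ne_zero).frontier_eq] at hy
  exact absurd hy (Set.notMem_empty y)

lemma prod_filter_not_dvd_eq_prod_unitOrOne (k : ℕ) :
    ∏ j ∈ (Ioo 0 k).filter (fun j => ¬ p ∣ j), (j : ℤ_[p]) =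
      ∏ j ∈ range k, unitOrOne (j : ℤ_[p]) := by
  rw [prod_filter]
  refine (prod_subset (fun j hj => by simp at hj ⊢; omega) fun j hj hj' => ?_).trans
    (prod_congr rfl fun j _ => ?_)
  · obtain rfl : j = 0 := by simp at hj hj'; omega
    simp
  · by_cases hj : p ∣ j
    · rw [if_neg (not_not.2 hj),
        unitOrOne_of_not_isUnit (PadicInt.isUnit_natCast_iff.not.2 (not_not.2 hj))]
    · rw [if_pos hj, unitOrOne_of_isUnit (PadicInt.isUnit_natCast_iff.2 hj)]

section FunctionalEquation

variable {G : ℤ_[p] → ℤ_[p]}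
  (hG : ∀ k : ℕ, G k = (-1) ^ k * ∏ j ∈ range k, unitOrOne (j : ℤ_[p]))
include hG

lemma gamma_natCast_add_natCast (m N : ℕ) :
    G ((m + N : ℕ) : ℤ_[p]) =
      (-1) ^ N * G m * ∏ i ∈ range N, unitOrOne ((m + i : ℕ) : ℤ_[p]) := by
  rw [hG, hG, prod_range_add, pow_add]
  ring

lemma gamma_add_natCast (hGcont : Continuous G) (x : ℤ_[p]) (N : ℕ) :
    G (x + N) = (-1) ^ N * G x * ∏ i ∈ range N, unitOrOne (x + (i : ℤ_[p])) := by
  refine PadicInt.denseRange_natCast.induction_on x (isClosed_eq (by fun_prop) (by fun_prop))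
    fun m => ?_
  simpa using gamma_natCast_add_natCast hG m N

lemma norm_gamma (hGcont : Continuous G) (x : ℤ_[p]) : ‖G x‖ = 1 := by
  refine PadicInt.denseRange_natCast.induction_on x
    (isClosed_eq (by fun_prop) continuous_const) fun k => ?_
  simp [hG, norm_unitOrOne]

end FunctionalEquation

lemma ascPochhammer_eval_eq_prod_range {S : Type*} [CommSemiring S] (x : S) (n : ℕ) :
    (ascPochhammer S n).eval x = ∏ i ∈ range n, (x + i) := by
  induction n with
  | zero => simp
  | succ n ih => rw [ascPochhammer_succ_eval, ih, prod_range_succ]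

lemma isUnit_add_natCast_iff {q : ℤ_[p]} {u : ℕ} (hq : u * q = 1) (i : ℕ) :
    IsUnit (q + i) ↔ ¬ p ∣ u * i + 1 := by
  have hqi : q + i = q * ((u * i + 1 : ℕ) : ℤ_[p]) := by
    push_cast
    linear_combination -(i : ℤ_[p]) * hq
  rw [hqi, IsUnit.mul_iff, PadicInt.isUnit_natCast_iff,
    and_iff_right (IsUnit.of_mul_eq_one_right _ hq)]

lemma prod_unitOrOne_quarter_add {c : ℕ} (hpc : p = 4 * c + 1) {q : ℤ_[p]} (hq : 4 * q = 1) :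
    ∏ i ∈ range (2 * c), unitOrOne (q + (i : ℤ_[p])) =
      ∏ i ∈ (range (2 * c)).erase c, (q + i) := by
  have hq' : ((4 : ℕ) : ℤ_[p]) * q = 1 := mod_cast hq
  -- `0 < 4i + 1 < 2p`, so `p ∣ 4i + 1` forces `4i + 1 = p`.
  have hunit : ∀ i < 2 * c, IsUnit (q + i) ↔ i ≠ c := fun i hi => by
    rw [isUnit_add_natCast_iff hq', not_iff_not]
    exact ⟨fun hdvd => by have := Nat.eq_of_dvd_of_lt_two_mul (by omega) hdvd (by omega); omega,
      fun h => ⟨1, by omega⟩⟩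
  have hc : c ∈ range (2 * c) :=
    mem_range.2 (by have := (Fact.out : p.Prime).two_le; omega)
  rw [← mul_prod_erase _ _ hc, unitOrOne_of_not_isUnit (by simp [hunit c (mem_range.1 hc)]),
    one_mul]
  refine prod_congr rfl fun i hi => unitOrOne_of_isUnit ?_
  obtain ⟨hic, hi⟩ := mem_erase.1 hi
  exact (hunit i (mem_range.1 hi)).2 hic

lemma neg_quarter_add_mul_half {R : Type*} [CommRing R] {h q : R} (hh : 2 * h = 1)
    (hq : 4 * q = 1) (c : ℕ) : -q + ((4 * c + 1 : ℕ) : R) * h = q + (2 * c : ℕ) := by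
  push_cast
  linear_combination (2 * c + 2 * q) * hh - h * hq

/-- for every prime `p ≡ 1 (mod 4)`, with `G` Morita's `p`-adic gamma
function, `h = 1/2` and `q = 1/4` in `ℤ_p`,
`(1/4)_{(p-1)/2} = (p/4) · Γ_p(-1/4 + p/2) / Γ_p(1/4)` in `ℚ_p`. -/
theorem poch_quarter_gammaP_one_mod_four (p : ℕ) [Fact p.Prime] (hp : p % 4 = 1)
    (G : ℤ_[p] → ℤ_[p]) (hGcont : Continuous G)
    (hGnat : ∀ k : ℕ, G (k : ℤ_[p]) =
      (-1)^k * ∏ j ∈ (Finset.Ioo 0 k).filter (fun j => ¬ p ∣ j), (j : ℤ_[p]))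
    (h q : ℤ_[p]) (hh : 2 * h = 1) (hq : 4 * q = 1) :
    ((poch (1/4) ((p-1)/2) : ℚ) : ℚ_[p]) =
      ((p : ℚ_[p]) / 4) * ((G (-q + p * h) : ℚ_[p]) / (G q : ℚ_[p])) := by
  obtain ⟨c, hpc⟩ : ∃ c, p = 4 * c + 1 := ⟨p / 4, by omega⟩
  have hG : ∀ k : ℕ, G k = (-1) ^ k * ∏ j ∈ range k, unitOrOne (j : ℤ_[p]) := fun k => by
    rw [hGnat, prod_filter_not_dvd_eq_prod_unitOrOne]
  have harg : -q + p * h = q + (2 * c : ℕ) := by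
    simpa only [← hpc] using neg_quarter_add_mul_half hh hq c
  have hshift : G (q + (2 * c : ℕ)) = G q * ∏ i ∈ (range (2 * c)).erase c, (q + i) := by
    rw [gamma_add_natCast hG hGcont, prod_unitOrOne_quarter_add hpc hq, pow_mul]
    simp
  have hGq : (G q : ℚ_[p]) ≠ 0 :=
    PadicInt.coe_ne_zero.2 (norm_ne_zero_iff.1 (by simp [norm_gamma hG hGcont]))
  have hq' : ((1 / 4 : ℚ) : ℚ_[p]) = q := by
    have h4 : (4 : ℚ_[p]) * q = 1 := by exact_mod_cast congrArg ((↑) : ℤ_[p] → ℚ_[p]) hq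
    push_cast
    linear_combination -h4 / 4
  have hpq : (p : ℚ_[p]) / 4 = q + c := by
    have hp' : (p : ℚ_[p]) = 4 * c + 1 := by exact_mod_cast congrArg (Nat.cast : ℕ → ℚ_[p]) hpc
    rw [← hq', hp']
    push_cast
    ring
  have hc : c ∈ range (2 * c) := mem_range.2 (by have := (Fact.out : p.Prime).two_le; omega)
  rw [show (p - 1) / 2 = 2 * c by omega, harg, hshift, PadicInt.coe_mul, PadicInt.coe_prod,
    mul_div_cancel_left₀ _ hGq, hpq, poch, ascPochhammer_eval_eq_prod_range, Rat.cast_prod,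
    ← mul_prod_erase _ _ hc]
  simp only [Rat.cast_add, Rat.cast_natCast, hq', PadicInt.coe_add, PadicInt.coe_natCast]
end

section
/- For every prime p ≡ 3 (mod 4), (3/4)_{(p-1)/2} = -(p/4) · Γ_p(1/4 + p/2) / Γ_p(3/4) in Q_p. -/
open Polynomial Finset
open scoped Classical

lemma poch_eq_prod (x : ℚ) (n : ℕ) : poch x n = ∏ i ∈ Finset.range n, (x + i) := by
  induction n with
  | zero => simp [poch]
  | succ n ih =>
    rw [poch, ascPochhammer_succ_eval, ← poch, ih, Finset.prod_range_succ]

section aux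

variable {p : ℕ} [Fact p.Prime] {G : ℤ_[p] → ℤ_[p]}

lemma pnat_dvd_iff (n : ℕ) : (p : ℤ_[p]) ∣ (n : ℤ_[p]) ↔ p ∣ n := by
  rw [← PadicInt.norm_lt_one_iff_dvd]
  have : ((n : ℤ) : ℤ_[p]) = (n : ℤ_[p]) := by push_cast; ring
  rw [← this, PadicInt.norm_int_lt_one_iff_dvd]
  exact Int.natCast_dvd_natCast

lemma G_nat_step
    (hGnat : ∀ k : ℕ, G (k : ℤ_[p]) =
      (-1)^k * ∏ j ∈ (Finset.Ioo 0 k).filter (fun j => ¬ p ∣ j), (j : ℤ_[p])) (k : ℕ) :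
    G ((k : ℤ_[p]) + 1) = (if p ∣ k then -1 else -(k : ℤ_[p])) * G k := by
  have h1 := hGnat (k + 1)
  push_cast at h1
  rw [h1, hGnat]
  rcases Nat.eq_zero_or_pos k with rfl | hk
  · have he : Finset.Ioo 0 1 = (∅ : Finset ℕ) := rfl
    simp [he]
  have hIoo : Finset.Ioo 0 (k + 1) = insert k (Finset.Ioo 0 k) := by
    ext j; simp only [Finset.mem_Ioo, Finset.mem_insert]; omega
  rw [hIoo, Finset.filter_insert]
  by_cases hd : p ∣ k
  · rw [if_neg (by simpa using hd), if_pos hd, pow_succ]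
    ring
  · rw [if_pos (by simpa using hd), if_neg hd,
      Finset.prod_insert (by simp), pow_succ]
    ring

lemma G_step (hGcont : Continuous G)
    (hGnat : ∀ k : ℕ, G (k : ℤ_[p]) =
      (-1)^k * ∏ j ∈ (Finset.Ioo 0 k).filter (fun j => ¬ p ∣ j), (j : ℤ_[p])) (x : ℤ_[p]) :
    G (x + 1) = (if (p : ℤ_[p]) ∣ x then -1 else -x) * G x := by
  obtain ⟨u, hu_mem, hu_tend⟩ :=
    mem_closure_iff_seq_limit.mp (PadicInt.denseRange_natCast (p := p) x)
  choose k hk using hu_mem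
  have hk_tend : Filter.Tendsto (fun n => ((k n : ℤ_[p]))) Filter.atTop (nhds x) := by
    convert hu_tend using 2 with n
    exact (hk n)
  have hev : ∀ᶠ n in Filter.atTop, (p : ℤ_[p]) ∣ ((k n : ℤ_[p]) - x) := by
    have h1 : ∀ᶠ n in Filter.atTop, ‖(k n : ℤ_[p]) - x‖ < 1 := by
      obtain ⟨N, hN⟩ := Metric.tendsto_atTop.mp hk_tend 1 one_pos
      filter_upwards [Filter.eventually_ge_atTop N] with n hn
      simpa [dist_eq_norm] using hN n hn
    filter_upwards [h1] with n hn
    exact (PadicInt.norm_lt_one_iff_dvd _).mp hn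
  have hG1 : Filter.Tendsto (fun n => G ((k n : ℤ_[p]) + 1)) Filter.atTop (nhds (G (x + 1))) :=
    hGcont.continuousAt.tendsto.comp (hk_tend.add tendsto_const_nhds)
  have hG0 : Filter.Tendsto (fun n => G ((k n : ℤ_[p]))) Filter.atTop (nhds (G x)) :=
    hGcont.continuousAt.tendsto.comp hk_tend
  by_cases hx : (p : ℤ_[p]) ∣ x
  · rw [if_pos hx]
    have hev2 : ∀ᶠ n in Filter.atTop, G ((k n : ℤ_[p]) + 1) = -1 * G (k n) := by
      filter_upwards [hev] with n hn
      have hdk : (p : ℤ_[p]) ∣ (k n : ℤ_[p]) := by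
        have := dvd_add hn hx
        simpa using this
      have hnatdvd : p ∣ k n := (pnat_dvd_iff _).mp hdk
      rw [G_nat_step hGnat, if_pos hnatdvd]
    have hlim := (hG0.const_mul (-1 : ℤ_[p])).congr'
      (by filter_upwards [hev2] with n hn; exact hn.symm)
    have := tendsto_nhds_unique hG1 hlim
    exact this
  · rw [if_neg hx]
    have hev2 : ∀ᶠ n in Filter.atTop, G ((k n : ℤ_[p]) + 1) = -(k n : ℤ_[p]) * G (k n) := by
      filter_upwards [hev] with n hn
      have hdk : ¬ p ∣ k n := by
        intro hc
        apply hx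
        have h2 : (p : ℤ_[p]) ∣ (k n : ℤ_[p]) := (pnat_dvd_iff _).mpr hc
        have := dvd_sub h2 hn
        simpa using this
      rw [G_nat_step hGnat, if_neg hdk]
    have hmul : Filter.Tendsto (fun n => -(k n : ℤ_[p]) * G (k n)) Filter.atTop
        (nhds (-x * G x)) := (hk_tend.neg).mul hG0
    exact tendsto_nhds_unique hG1 (hmul.congr'
      (by filter_upwards [hev2] with n hn; exact hn.symm))

lemma G_shift (hGcont : Continuous G)
    (hGnat : ∀ k : ℕ, G (k : ℤ_[p]) =
      (-1)^k * ∏ j ∈ (Finset.Ioo 0 k).filter (fun j => ¬ p ∣ j), (j : ℤ_[p]))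
    (x : ℤ_[p]) (n : ℕ) :
    G (x + n) = (∏ i ∈ Finset.range n,
      (if (p : ℤ_[p]) ∣ (x + i) then -1 else -(x + i))) * G x := by
  induction n with
  | zero => simp
  | succ n ih =>
    have hx : x + ((n : ℤ_[p]) + 1) = (x + n) + 1 := by ring
    push_cast
    rw [hx, G_step hGcont hGnat, ih, Finset.prod_range_succ]
    ring

lemma G_norm_one (hGcont : Continuous G)
    (hGnat : ∀ k : ℕ, G (k : ℤ_[p]) =
      (-1)^k * ∏ j ∈ (Finset.Ioo 0 k).filter (fun j => ¬ p ∣ j), (j : ℤ_[p]))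
    (x : ℤ_[p]) : ‖G x‖ = 1 := by
  have hfun : (fun x : ℤ_[p] => ‖G x‖) = fun _ => (1 : ℝ) := by
    apply Continuous.ext_on (PadicInt.denseRange_natCast (p := p)) hGcont.norm
      continuous_const
    rintro _ ⟨k, rfl⟩
    show ‖G (k : ℤ_[p])‖ = 1
    rw [hGnat, norm_mul]
    have h1 : ‖((-1 : ℤ_[p]))^k‖ = 1 := by simp
    have h2 : ‖∏ j ∈ (Finset.Ioo 0 k).filter (fun j => ¬ p ∣ j), (j : ℤ_[p])‖ = 1 := by
      refine Finset.prod_induction _ (fun z => ‖z‖ = 1)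
        (fun a b ha hb => by
          show ‖a * b‖ = 1
          rw [norm_mul, show ‖a‖ = 1 from ha, show ‖b‖ = 1 from hb, one_mul])
        (by simp) ?_
      intro j hj
      simp only [Finset.mem_filter] at hj
      show ‖((j : ℕ) : ℤ_[p])‖ = 1
      have hne : ¬ ‖((j : ℕ) : ℤ_[p])‖ < 1 := by
        rw [PadicInt.norm_lt_one_iff_dvd, pnat_dvd_iff]
        exact hj.2
      have hle : ‖((j : ℕ) : ℤ_[p])‖ ≤ 1 := PadicInt.norm_le_one _
      linarith
    rw [h1, h2, one_mul]
  exact congrFun hfun x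

end aux

/-- for every prime `p ≡ 3 (mod 4)`, with `G` Morita's `p`-adic gamma
function, `h = 1/2` and `q = 1/4` in `ℤ_p`,
`(3/4)_{(p-1)/2} = -(p/4) · Γ_p(1/4 + p/2) / Γ_p(3/4)` in `ℚ_p`. -/
theorem poch_three_quarters_gammaP_three_mod_four (p : ℕ) [Fact p.Prime] (hp : p % 4 = 3)
    (G : ℤ_[p] → ℤ_[p]) (hGcont : Continuous G)
    (hGnat : ∀ k : ℕ, G (k : ℤ_[p]) =
      (-1)^k * ∏ j ∈ (Finset.Ioo 0 k).filter (fun j => ¬ p ∣ j), (j : ℤ_[p]))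
    (h q : ℤ_[p]) (hh : 2 * h = 1) (hq : 4 * q = 1) :
    ((poch (3/4) ((p-1)/2) : ℚ) : ℚ_[p]) =
      -((p : ℚ_[p]) / 4) * ((G (q + p * h) : ℚ_[p]) / (G (3 * q) : ℚ_[p])) := by
  have hp_prime := (Fact.out : p.Prime)
  have hp3 : 3 ≤ p := by
    have := hp_prime.two_le; omega
  set m : ℕ := (p - 1) / 2 with hm_def
  set i0 : ℕ := (p - 3) / 4 with hi0_def
  have hmi : m = 2 * i0 + 1 := by omega
  have hi0p : 4 * i0 + 3 = p := by omega
  have hi0m : i0 ∈ Finset.range m := by rw [Finset.mem_range]; omega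
  -- `3q + m = q + p·h`
  have h2m : (2 : ℤ_[p]) * m = (p : ℤ_[p]) - 1 := by
    have hnat : 2 * m = p - 1 := by omega
    have : ((2 * m : ℕ) : ℤ_[p]) = ((p - 1 : ℕ) : ℤ_[p]) := by rw [hnat]
    push_cast [Nat.cast_sub hp_prime.one_le] at this
    linear_combination this
  have key : (3 * q : ℤ_[p]) + m = q + p * h := by
    have h4 : (4 : ℤ_[p]) ≠ 0 := by
      intro hc
      have h0 : (4 : ℤ_[p]) * q = 0 := by rw [hc, zero_mul]
      rw [hq] at h0; exact one_ne_zero h0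
    apply mul_left_cancel₀ h4
    linear_combination 2 * hq + 2 * h2m - 2 * (p : ℤ_[p]) * hh
  -- the shift formula
  have hshift := G_shift hGcont hGnat (3 * q) m
  rw [key] at hshift
  -- 4 is a unit in ℤ_p
  have h4unit : IsUnit (4 : ℤ_[p]) := by
    rw [PadicInt.isUnit_iff]
    have hle : ‖((4 : ℤ) : ℤ_[p])‖ ≤ 1 := PadicInt.norm_le_one _
    have hnlt : ¬ ‖((4 : ℤ) : ℤ_[p])‖ < 1 := by
      rw [PadicInt.norm_int_lt_one_iff_dvd]
      intro hc
      have hpd : p ∣ 4 := by exact_mod_cast hc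
      have hle4 : p ≤ 4 := Nat.le_of_dvd (by norm_num) hpd
      have hp3' : p = 3 := by omega
      rw [hp3'] at hpd
      norm_num at hpd
    push_cast at hle hnlt
    linarith
  -- characterize the exceptional index
  have hdvd_iff : ∀ i ∈ Finset.range m, ((p : ℤ_[p]) ∣ (3 * q + i) ↔ i = i0) := by
    intro i hi
    rw [Finset.mem_range] at hi
    have hcast : (4 : ℤ_[p]) * (3 * q + i) = ((3 + 4 * i : ℕ) : ℤ_[p]) := by
      push_cast
      linear_combination 3 * hq
    constructor
    · intro hd
      have hd2 : (p : ℤ_[p]) ∣ ((3 + 4 * i : ℕ) : ℤ_[p]) := by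
        rw [← hcast]
        exact hd.mul_left _
      rw [pnat_dvd_iff] at hd2
      -- 3 + 4i ∈ (0, 2p), multiple of p ⇒ = p
      have hlt : 3 + 4 * i < 2 * p := by omega
      have hge : p ≤ 3 + 4 * i := Nat.le_of_dvd (by omega) hd2
      have hsub : p ∣ (3 + 4 * i - p) := (Nat.dvd_sub hd2 dvd_rfl)
      have h0 : 3 + 4 * i - p = 0 := by
        rcases Nat.eq_zero_or_pos (3 + 4 * i - p) with h0 | h0
        · exact h0
        · exact Nat.eq_zero_of_dvd_of_lt hsub (by omega)
      omega
    · rintro rfl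
      have hd2 : (p : ℤ_[p]) ∣ ((3 + 4 * i0 : ℕ) : ℤ_[p]) := by
        rw [pnat_dvd_iff]
        exact ⟨1, by omega⟩
      rw [← hcast] at hd2
      exact (h4unit.dvd_mul_left).mp hd2
  -- nonvanishing of G (3q)
  have hG3q : ((G (3 * q) : ℚ_[p])) ≠ 0 := by
    rw [PadicInt.coe_ne_zero]
    intro hc
    have := G_norm_one hGcont hGnat (3 * q)
    rw [hc] at this
    simp at this
  -- cast q to ℚ_p
  have hq' : ((q : ℤ_[p]) : ℚ_[p]) = 1 / 4 := by
    have h2 : ((4 * q : ℤ_[p]) : ℚ_[p]) = ((1 : ℤ_[p]) : ℚ_[p]) := by rw [hq]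
    rw [PadicInt.coe_mul, PadicInt.coe_one,
      show ((4 : ℤ_[p]) : ℚ_[p]) = 4 from by norm_cast] at h2
    rw [eq_div_iff (by norm_num : (4 : ℚ_[p]) ≠ 0)]
    linear_combination h2
  -- LHS as a product in ℚ_p
  have hL : ((poch (3/4) m : ℚ) : ℚ_[p]) = ∏ i ∈ Finset.range m, ((3 : ℚ_[p])/4 + i) := by
    rw [poch_eq_prod]
    push_cast
    rfl
  -- the RHS product, cast to ℚ_p
  have hP : (((∏ i ∈ Finset.range m,
        (if (p : ℤ_[p]) ∣ (3 * q + i) then -1 else -(3 * q + i))) : ℤ_[p]) : ℚ_[p]) =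
      ∏ i ∈ Finset.range m, (if i = i0 then (-1 : ℚ_[p]) else -((3 : ℚ_[p])/4 + i)) := by
    rw [show (((∏ i ∈ Finset.range m,
        (if (p : ℤ_[p]) ∣ (3 * q + i) then -1 else -(3 * q + i))) : ℤ_[p]) : ℚ_[p]) =
        (PadicInt.Coe.ringHom (p := p)) (∏ i ∈ Finset.range m,
        (if (p : ℤ_[p]) ∣ (3 * q + i) then -1 else -(3 * q + i))) from rfl,
      map_prod]
    refine Finset.prod_congr rfl ?_
    intro i hi
    by_cases hcase : i = i0
    · rw [if_pos ((hdvd_iff i hi).mpr hcase), if_pos hcase]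
      norm_num
    · rw [if_neg (fun hc => hcase ((hdvd_iff i hi).mp hc)), if_neg hcase]
      show ((-(3 * q + (i : ℕ)) : ℤ_[p]) : ℚ_[p]) = _
      push_cast [hq', show ((3 : ℤ_[p]) : ℚ_[p]) = (3 : ℚ_[p]) from by norm_cast]
      ring
  -- put it together
  rw [hshift, PadicInt.coe_mul, mul_div_assoc, div_self hG3q, mul_one, hL, hP]
  have ha0 : (3 : ℚ_[p]) / 4 + (i0 : ℚ_[p]) = (p : ℚ_[p]) / 4 := by
    have h3 : ((4 * i0 + 3 : ℕ) : ℚ_[p]) = ((p : ℕ) : ℚ_[p]) := by rw [hi0p]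
    push_cast at h3
    field_simp
    linear_combination h3
  rw [← Finset.mul_prod_erase _ _ hi0m,
    ← Finset.mul_prod_erase _ (fun i => if i = i0 then (-1 : ℚ_[p]) else -((3 : ℚ_[p])/4 + i))
      hi0m]
  simp only [if_pos rfl]
  have herase : ∏ i ∈ (Finset.range m).erase i0,
      (if i = i0 then (-1 : ℚ_[p]) else -((3 : ℚ_[p])/4 + i)) =
      ∏ i ∈ (Finset.range m).erase i0, -((3 : ℚ_[p])/4 + i) :=
    Finset.prod_congr rfl (fun i hi => if_neg (Finset.ne_of_mem_erase hi))
  have hneg : ∏ i ∈ (Finset.range m).erase i0, -((3 : ℚ_[p])/4 + i) =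
      (-1 : ℚ_[p])^((Finset.range m).erase i0).card *
        ∏ i ∈ (Finset.range m).erase i0, ((3 : ℚ_[p])/4 + i) := by
    calc ∏ i ∈ (Finset.range m).erase i0, -((3 : ℚ_[p])/4 + i)
        = ∏ i ∈ (Finset.range m).erase i0, ((-1 : ℚ_[p]) * ((3 : ℚ_[p])/4 + i)) :=
          Finset.prod_congr rfl (fun i _ => by ring)
      _ = (∏ _i ∈ (Finset.range m).erase i0, (-1 : ℚ_[p])) *
            ∏ i ∈ (Finset.range m).erase i0, ((3 : ℚ_[p])/4 + i) := Finset.prod_mul_distrib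
      _ = _ := by rw [Finset.prod_const]
  have hcard : ((Finset.range m).erase i0).card = 2 * i0 := by
    rw [Finset.card_erase_of_mem hi0m, Finset.card_range]; omega
  rw [herase, hneg, hcard, pow_mul, ha0]
  norm_num
end

section
/- Let F̄(n,k) = (-1)^{n+k}(4n+1)((1/2)_n)^2 (1/2)_{n+k} / ((1)_n^2 (1)_{n-k} ((1/2)_k)^2) and Ḡ(n,k) = 8n²(n-k)(-1)^{n+k}((1/2)_n)^2 (1/2)_{n+k} / ((2k+1)^2 (1)_n^2 (1)_{n-k} ((1/2)_k)^2), interpreted over Q with the convention 1/(1)_{-k} = (1-k)_k = 0 for k > 0. Then for all integers n ≥ 0 and k ≥ 0 with k ≤ n, F̄(n,k+1) - F̄(n,k) = Ḡ(n+1,k) - Ḡ(n,k). -/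
open Polynomial

/-- Rising Pochhammer symbol with integer index: `(x)_{-k} = 1/(x-k)_k` for `k > 0`;
in particular `(1)_{-k} = 1/(1-k)_k = 1/0`, interpreted as `0`, for `k > 0`. -/
noncomputable def pochZ (x : ℚ) (m : ℤ) : ℚ :=
  if 0 ≤ m then (ascPochhammer ℚ m.toNat).eval x
  else 1 / (ascPochhammer ℚ (-m).toNat).eval (x + m)

/-- `F̄(n,k)` for Van Hamme (B.2). -/
noncomputable def FbarB2 (n k : ℕ) : ℚ :=
  (-1)^(n+k) * (4*n+1) * (poch (1/2) n)^2 * poch (1/2) (n+k)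
    / ((poch 1 n)^2 * pochZ 1 ((n : ℤ) - k) * (poch (1/2) k)^2)

/-- `Ḡ(n,k)` for Van Hamme (B.2). -/
noncomputable def GbarB2 (n k : ℕ) : ℚ :=
  8 * n^2 * ((n : ℚ) - k) * (-1)^(n+k) * (poch (1/2) n)^2 * poch (1/2) (n+k)
    / ((2*k+1)^2 * (poch 1 n)^2 * pochZ 1 ((n : ℤ) - k) * (poch (1/2) k)^2)

set_option maxHeartbeats 1000000

lemma poch_zero (x : ℚ) : poch x 0 = 1 := by simp [poch]

lemma poch_pos (x : ℚ) (hx : 0 < x) (n : ℕ) : 0 < poch x n := by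
  induction n with
  | zero => simp [poch]
  | succ n ih => rw [poch_succ]; have : (0:ℚ) ≤ n := Nat.cast_nonneg n; nlinarith

lemma pochZ_coe (x : ℚ) (m : ℕ) : pochZ x (m : ℤ) = poch x m := by
  simp [pochZ, poch]

lemma pochZ_one_neg_one : pochZ 1 (-1) = 0 := by
  norm_num [pochZ, ascPochhammer_one]

lemma sub_div_eq_sub_div' {A B A' B' C D C' D' : ℚ} (hB : B ≠ 0) (hB' : B' ≠ 0)
    (hD : D ≠ 0) (hD' : D' ≠ 0)
    (h : (A * B' - A' * B) * (D * D') = (C * D' - C' * D) * (B * B')) :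
    A / B - A' / B' = C / D - C' / D' := by
  field_simp
  linear_combination h

lemma neg_div_eq_div' {A B C D : ℚ} (hB : B ≠ 0) (hD : D ≠ 0)
    (h : -A * D = C * B) : -(A / B) = C / D := by
  field_simp
  linear_combination h

/-- the WZ pair for Van Hamme (B.2):
`F̄(n,k+1) - F̄(n,k) = Ḡ(n+1,k) - Ḡ(n,k)` for `0 ≤ k ≤ n`. -/
theorem wz_pair_B2 (n k : ℕ) (hk : k ≤ n) :
    FbarB2 n (k+1) - FbarB2 n k = GbarB2 (n+1) k - GbarB2 n k := by
  obtain ⟨m, rfl⟩ := Nat.exists_eq_add_of_le hk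
  clear hk
  unfold FbarB2 GbarB2
  cases m with
  | zero =>
    rw [show ((k+0:ℕ):ℤ) - ((k+1:ℕ):ℤ) = -1 by push_cast; ring,
        show ((k+0:ℕ):ℤ) - ((k:ℕ):ℤ) = ((0:ℕ):ℤ) by push_cast; ring,
        show ((k+0+1:ℕ):ℤ) - ((k:ℕ):ℤ) = (((0:ℕ)+1:ℕ):ℤ) by push_cast; ring,
        pochZ_coe, pochZ_coe, pochZ_one_neg_one]
    rw [show k+0+(k+1) = (k+k)+1 by omega, show k+0+k = k+k by omega,
        show k+0+1 = k+1 by omega, show k+1+k = (k+k)+1 by omega]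
    simp only [poch_succ, poch_zero, pow_succ, Nat.add_zero]
    push_cast
    rw [Even.neg_one_pow (⟨k, rfl⟩ : Even (k+k))]
    have hc : (0:ℚ) < poch 1 k := poch_pos 1 one_pos k
    have he : (0:ℚ) < poch (1/2) k := poch_pos (1/2) (by norm_num) k
    simp only [sub_self, mul_zero, zero_mul, div_zero, zero_div, zero_sub, sub_zero]
    exact neg_div_eq_div' (by positivity) (by positivity) (by ring)
  | succ m =>
    rw [show ((k+(m+1):ℕ):ℤ) - ((k+1:ℕ):ℤ) = ((m:ℕ):ℤ) by push_cast; ring,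
        show ((k+(m+1):ℕ):ℤ) - ((k:ℕ):ℤ) = ((m+1:ℕ):ℤ) by push_cast; ring,
        show ((k+(m+1)+1:ℕ):ℤ) - ((k:ℕ):ℤ) = (((m+1)+1:ℕ):ℤ) by push_cast; ring,
        pochZ_coe, pochZ_coe, pochZ_coe]
    rw [show k+(m+1)+(k+1) = ((k+k+m)+1)+1 by omega,
        show k+(m+1)+k = (k+k+m)+1 by omega,
        show k+(m+1)+1+k = ((k+k+m)+1)+1 by omega,
        show k+(m+1)+1 = ((k+m)+1)+1 by omega,
        show k+(m+1) = (k+m)+1 by omega]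
    simp only [poch_succ, poch_zero, pow_succ]
    push_cast
    have hc : (0:ℚ) < poch 1 (k+m) := poch_pos 1 one_pos _
    have hd : (0:ℚ) < poch 1 m := poch_pos 1 one_pos m
    have he : (0:ℚ) < poch (1/2) k := poch_pos (1/2) (by norm_num) k
    exact sub_div_eq_sub_div' (by positivity) (by positivity) (by positivity)
      (by positivity) (by ring)
end

section
/- Let F̄(n,k) = (6n+1)((1/3)_n)^4 (1/3)_{n+k} (1/3)_{n-k} ((2/3)_k)^4 / ((1)_n^4 (1)_{n-k} (1)_{n+k} ((1/3)_k)^4) and Ḡ(n,k) = 729(2k+1)n^4(n-k)((1/3)_n)^4 (1/3)_{n+k} (1/3)_{n-k} ((2/3)_k)^4 / ((3k+2-3n)(3k+1)^4 (1)_n^4 (1)_{n-k} (1)_{n+k} ((1/3)_k)^4), over Q with the convention 1/(1)_{-j} = 0 for j > 0 and wherever the denominators are nonzero. Then F̄(n,k+1) - F̄(n,k) = Ḡ(n+1,k) - Ḡ(n,k) for all integers n ≥ 0 and 0 ≤ k ≤ n with 3k+2 ≠ 3n and 3k+5 ≠ 3n. -/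
/-! `F̄(n,k)` and `Ḡ(n,k)` are one hypergeometric term in `k` and `m = n - k` times rational
functions of `k, m`, and by the Pochhammer recurrences so are the shifts `F̄(n,k+1)` and
`Ḡ(n+1,k)`. The boundary value `F̄(n,n+1) = 0` fits the same pattern, because the rational factor
of `F̄(n,k+1)` vanishes at `m = 0`. Dividing the WZ equation by the term leaves an identity of
rational functions, checked by clearing denominators. -/

open Polynomial

/-- `F̄(n,k)` for Van Hamme (D.2). -/
noncomputable def FbarD2 (n k : ℕ) : ℚ :=
  (6*n+1) * (poch (1/3) n)^4 * poch (1/3) (n+k) * pochZ (1/3) ((n : ℤ) - k)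
      * (poch (2/3) k)^4
    / ((poch 1 n)^4 * pochZ 1 ((n : ℤ) - k) * poch 1 (n+k) * (poch (1/3) k)^4)

/-- `Ḡ(n,k)` for Van Hamme (D.2). -/
noncomputable def GbarD2 (n k : ℕ) : ℚ :=
  729 * (2*k+1) * n^4 * ((n : ℚ) - k) * (poch (1/3) n)^4 * poch (1/3) (n+k)
      * pochZ (1/3) ((n : ℤ) - k) * (poch (2/3) k)^4
    / ((3*(k : ℚ) + 2 - 3*n) * (3*k+1)^4 * (poch 1 n)^4 * pochZ 1 ((n : ℤ) - k)
      * poch 1 (n+k) * (poch (1/3) k)^4)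

lemma pochZ_natCast (x : ℚ) (j : ℕ) : pochZ x j = poch x j := by
  simp [pochZ, poch]

noncomputable def pochRatio (x y : ℚ) (n : ℕ) : ℚ := poch x n / poch y n

lemma pochRatio_succ (x y : ℚ) (n : ℕ) :
    pochRatio x y (n + 1) = pochRatio x y n * ((x + n) / (y + n)) := by
  simp only [pochRatio, poch, ascPochhammer_succ_eval]
  exact mul_div_mul_comm _ _ _ _

/-- The hypergeometric term of `F̄(n,k)` and `Ḡ(n,k)` at `n = k + m`; indexing by `m = n - k`
rather than by `n` keeps every Pochhammer index a natural number. -/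
noncomputable def baseTermD2 (k m : ℕ) : ℚ :=
  pochRatio (1/3) 1 (k + m) ^ 4 * pochRatio (1/3) 1 (2*k + m) * pochRatio (1/3) 1 m
    * pochRatio (2/3) (1/3) k ^ 4

lemma baseTermD2_succ_right (k m : ℕ) :
    baseTermD2 k (m + 1) = baseTermD2 k m * ((k + m + 1/3) / (k + m + 1)) ^ 4
      * ((2*k + m + 1/3) / (2*k + m + 1)) * ((m + 1/3) / (m + 1)) := by
  simp only [baseTermD2, ← add_assoc, pochRatio_succ]
  push_cast
  ring

lemma baseTermD2_succ_left (k m : ℕ) :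
    baseTermD2 (k + 1) m = baseTermD2 k (m + 1) * ((m + 1) / (m + 1/3))
      * ((2*k + m + 4/3) / (2*k + m + 2)) * ((k + 2/3) / (k + 1/3)) ^ 4 := by
  simp only [baseTermD2, show k + 1 + m = k + (m + 1) by ring,
    show 2 * (k + 1) + m = 2 * k + (m + 1) + 1 by ring, pochRatio_succ]
  push_cast
  field_simp
  ring

lemma FbarD2_eq_mul_baseTermD2 (k m : ℕ) : FbarD2 (k + m) k = (6 * (k + m) + 1) * baseTermD2 k m := by
  rw [FbarD2, show ((k + m : ℕ) : ℤ) - k = (m : ℕ) by push_cast; ring,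
    show k + m + k = 2 * k + m by ring]
  simp only [baseTermD2, pochRatio, pochZ_natCast]
  push_cast
  simp only [div_eq_mul_inv, mul_inv]
  ring

lemma GbarD2_eq_mul_baseTermD2 (k m : ℕ) :
    GbarD2 (k + m) k = 729 * (2*k + 1) * (k + m) ^ 4 * m / ((3*k + 2 - 3*(k + m)) * (3*k + 1) ^ 4)
      * baseTermD2 k m := by
  rw [GbarD2, show ((k + m : ℕ) : ℤ) - k = (m : ℕ) by push_cast; ring,
    show k + m + k = 2 * k + m by ring]
  simp only [baseTermD2, pochRatio, pochZ_natCast]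
  push_cast
  simp only [div_eq_mul_inv, mul_inv]
  ring

lemma FbarD2_succ_eq_mul_baseTermD2 (k m : ℕ) :
    FbarD2 (k + m) (k + 1) = (6 * (k + m) + 1)
      * (m * (6*k + 3*m + 1) * (3*k + 2) ^ 4 / ((3*m - 2) * (2*k + m + 1) * (3*k + 1) ^ 4))
      * baseTermD2 k m := by
  cases m with
  | zero =>
    -- `(1)_{-1} = 0` sits in the denominator of `F̄(k, k+1)`, and `x / 0 = 0`.
    rw [FbarD2, show ((k + 0 : ℕ) : ℤ) - (k + 1 : ℕ) = -1 by push_cast; ring, pochZ_one_neg_one]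
    simp
  | succ m =>
    rw [show k + (m + 1) = k + 1 + m by ring, FbarD2_eq_mul_baseTermD2, baseTermD2_succ_left]
    push_cast
    rw [show 3 * ((m : ℚ) + 1) - 2 = 3 * m + 1 by ring]
    field_simp
    ring

lemma wzD2_rational_identity (k m : ℕ) :
    (6 * ((k : ℚ) + m) + 1)
        * (m * (6*k + 3*m + 1) * (3*k + 2) ^ 4 / ((3*m - 2) * (2*k + m + 1) * (3*k + 1) ^ 4))
      - (6 * (k + m) + 1)
    = 729 * (2*k + 1) * (k + m + 1) ^ 4 * (m + 1) / ((3*k + 2 - 3*(k + m + 1)) * (3*k + 1) ^ 4)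
        * (((k + m + 1/3) / (k + m + 1)) ^ 4 * ((2*k + m + 1/3) / (2*k + m + 1))
          * ((m + 1/3) / (m + 1)))
      - 729 * (2*k + 1) * (k + m) ^ 4 * m / ((3*k + 2 - 3*(k + m)) * (3*k + 1) ^ 4) := by
  have hm : (m : ℚ) * 3 - 2 ≠ 0 := by
    intro h
    have : ((m * 3 : ℕ) : ℚ) = 2 := by push_cast; linarith
    norm_cast at this
    omega
  rw [show (3 * k + 2 - 3 * (k + m) : ℚ) = -(3 * m - 2) by ring,
    show (3 * k + 2 - 3 * (k + m + 1) : ℚ) = -(3 * m + 1) by ring]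
  field_simp
  ring

theorem wz_pair_D2_general (n k : ℕ) (hk : k ≤ n) :
    FbarD2 n (k+1) - FbarD2 n k = GbarD2 (n+1) k - GbarD2 n k := by
  obtain ⟨m, rfl⟩ := Nat.exists_eq_add_of_le hk
  have hG := GbarD2_eq_mul_baseTermD2 k (m + 1)
  rw [← add_assoc, baseTermD2_succ_right] at hG
  rw [FbarD2_succ_eq_mul_baseTermD2, FbarD2_eq_mul_baseTermD2, GbarD2_eq_mul_baseTermD2, hG]
  push_cast
  linear_combination baseTermD2 k m * wzD2_rational_identity k m

/-- the WZ pair for Van Hamme (D.2):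
`F̄(n,k+1) - F̄(n,k) = Ḡ(n+1,k) - Ḡ(n,k)` for `0 ≤ k ≤ n` with `3k+2 ≠ 3n` and
`3k+5 ≠ 3n`. -/
theorem wz_pair_D2 (n k : ℕ) (hk : k ≤ n) (h1 : 3*k + 2 ≠ 3*n) (h2 : 3*k + 5 ≠ 3*n) :
    FbarD2 n (k+1) - FbarD2 n k = GbarD2 (n+1) k - GbarD2 n k :=
  wz_pair_D2_general n k hk
end
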